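/- arXiv:1701.02857 — 2 statements merged into one kernel-verified Lean document; each statement's English description precedes it below -/
import Mathlib

section
/- The unique minimizer of F(c) = sum_{i=1}^n (x_i - c_i)^2 + lambda * sum_{k<l} |c_k - c_l| preserves the ordering of the data: if x_i <= x_j then the minimizing centroids satisfy c_i <= c_j. -/
open Finset

private lemma pair_half (n : ℕ) (f : Fin n → ℝ) :
    2 * ∑ k, ∑ l with k < l, |f k - f l| = ∑ k : Fin n, ∑ l, |f k - f l| := by
  have hB : ∀ k : Fin n, (∑ l with ¬ k < l, |f k - f l|) = ∑ l with l < k, |f k - f l| := by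
    intro k
    refine (Finset.sum_subset ?_ ?_).symm
    · intro l hl
      simp only [mem_filter, mem_univ, true_and] at hl ⊢
      exact not_lt_of_gt hl
    · intro l hl hnl
      simp only [mem_filter, mem_univ, true_and, not_lt] at hl hnl
      have : l = k := le_antisymm hl hnl
      simp [this]
  have hswap : (∑ k : Fin n, ∑ l with l < k, |f k - f l|)
      = ∑ k : Fin n, ∑ l with k < l, |f k - f l| := by
    rw [Finset.sum_comm' (s' := fun y => univ.filter fun x => y < x) (t' := univ)
      (by intro a b; simp [and_comm])]
    refine Finset.sum_congr rfl fun k _ => Finset.sum_congr rfl fun l _ => ?_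
    exact abs_sub_comm _ _
  symm
  calc ∑ k : Fin n, ∑ l, |f k - f l|
      = ∑ k : Fin n, ((∑ l with k < l, |f k - f l|) + ∑ l with ¬ k < l, |f k - f l|) := by
        refine Finset.sum_congr rfl fun k _ => ?_
        exact (Finset.sum_filter_add_sum_filter_not _ _ _).symm
    _ = (∑ k : Fin n, ∑ l with k < l, |f k - f l|)
        + ∑ k : Fin n, ∑ l with l < k, |f k - f l| := by
        rw [Finset.sum_add_distrib]
        simp_rw [hB]
    _ = 2 * ∑ k, ∑ l with k < l, |f k - f l| := by rw [hswap]; ring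

/-- The minimizer of the fused clustering criterion preserves the order of the data:
if `x i ≤ x j` then the minimizing centroids satisfy `c i ≤ c j`. -/
theorem minimizer_preserves_order (n : ℕ) (x : Fin n → ℝ) (lam : ℝ) (hlam : 0 ≤ lam)
    (c : Fin n → ℝ)
    (hmin : ∀ d : Fin n → ℝ,
      (∑ i, (x i - c i) ^ 2) + lam * ∑ k, ∑ l with k < l, |c k - c l| ≤
      (∑ i, (x i - d i) ^ 2) + lam * ∑ k, ∑ l with k < l, |d k - d l|)
    (i j : Fin n) (hij : x i ≤ x j) :
    c i ≤ c j := by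
  by_contra hc
  push_neg at hc
  have hne : i ≠ j := by intro h; rw [h] at hc; exact lt_irrefl _ hc
  set σ := Equiv.swap i j with hσ
  set d : Fin n → ℝ := fun k => (c k + c (σ k)) / 2 with hd
  -- penalty comparison
  have hTσ : (∑ k : Fin n, ∑ l, |c (σ k) - c (σ l)|) = ∑ k : Fin n, ∑ l, |c k - c l| := by
    rw [← Equiv.sum_comp σ (fun k => ∑ l, |c k - c l|)]
    refine Finset.sum_congr rfl fun k _ => ?_
    exact Equiv.sum_comp σ (fun l => |c (σ k) - c l|)
  have hpen : (∑ k, ∑ l with k < l, |d k - d l|) ≤ ∑ k, ∑ l with k < l, |c k - c l| := by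
    have h2 : (2:ℝ) * ∑ k, ∑ l with k < l, |d k - d l|
        ≤ 2 * ∑ k, ∑ l with k < l, |c k - c l| := by
      rw [pair_half, pair_half]
      have hterm : ∀ k l : Fin n, |d k - d l| ≤ (|c k - c l| + |c (σ k) - c (σ l)|) / 2 := by
        intro k l
        have heq : d k - d l = ((c k - c l) + (c (σ k) - c (σ l))) / 2 := by
          simp only [hd]; ring
        rw [heq, abs_div]
        simp only [abs_two]
        gcongr
        exact abs_add_le _ _
      calc (∑ k : Fin n, ∑ l, |d k - d l|)
          ≤ ∑ k : Fin n, ∑ l, (|c k - c l| + |c (σ k) - c (σ l)|) / 2 :=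
            Finset.sum_le_sum fun k _ => Finset.sum_le_sum fun l _ => hterm k l
        _ = ((∑ k : Fin n, ∑ l, |c k - c l|) + ∑ k : Fin n, ∑ l, |c (σ k) - c (σ l)|) / 2 := by
            rw [← Finset.sum_add_distrib, Finset.sum_div]
            refine Finset.sum_congr rfl fun k _ => ?_
            rw [← Finset.sum_add_distrib, Finset.sum_div]
        _ = ∑ k : Fin n, ∑ l, |c k - c l| := by rw [hTσ]; ring
    linarith
  -- quadratic comparison
  have hdi : d i = (c i + c j) / 2 := by simp [hd, hσ, Equiv.swap_apply_left]
  have hdj : d j = (c i + c j) / 2 := by simp [hd, hσ, Equiv.swap_apply_right, add_comm]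
  have hquad : (∑ k, (x k - d k) ^ 2) < ∑ k, (x k - c k) ^ 2 := by
    have hsum : (∑ k, ((x k - c k) ^ 2 - (x k - d k) ^ 2))
        = ((x i - c i) ^ 2 - (x i - d i) ^ 2) + ((x j - c j) ^ 2 - (x j - d j) ^ 2) := by
      refine Finset.sum_eq_add_of_mem i j (mem_univ i) (mem_univ j) hne ?_
      intro k _ hk
      have hσk : σ k = k := Equiv.swap_apply_of_ne_of_ne hk.1 hk.2
      simp only [hd, hσk]
      ring
    have hpos : (0:ℝ) < ∑ k, ((x k - c k) ^ 2 - (x k - d k) ^ 2) := by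
      rw [hsum, hdi, hdj]
      nlinarith [sq_nonneg (c i - c j), hc, hij]
    rw [Finset.sum_sub_distrib] at hpos
    linarith
  have := hmin d
  nlinarith [mul_le_mul_of_nonneg_left hpen hlam]
end

section
/- Decomposition bound for conditional mean deviations: with d_{a,R}(x) = (R - x)/(R - a) * 1{a < x < R}, the deviation between empirical and population conditional means satisfies |hat-mu_{a,R} - mu_{a,R}| <= |P_n d_{a,R} - P d_{a,R}| * (R-a)/P(a,R) + |P_n(a,R) - P(a,R)| * (R - hat-mu_{a,R})/P(a,R), provided P_n(a,R) > 0 and P(a,R) > 0. -/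
open MeasureTheory
open scoped ENNReal

/-! Since `t 𝟙(a,R) = R 𝟙(a,R) - (R - a) d_{a,R}`, every conditional mean on `(a,R)` equals
`R - (R - a) μ d / μ(a,R)`. With `c = R - a`, the bound is then the triangle inequality for
`c D / p - c D' / p' = (D - D') c / p + (p' - p) (c D' / p') / p`, where `c D' / p' = R - μ̂ ≥ 0`. -/

open Set

lemma lt_of_measureReal_Ioo_pos {μ : Measure ℝ} {a R : ℝ} (h : 0 < (μ (Ioo a R)).toReal) :
    a < R := by
  by_contra haR
  simp [Ioo_eq_empty haR] at h

lemma integrableOn_Ioo_of_continuous {μ : Measure ℝ} {a R : ℝ} {f : ℝ → ℝ} (hf : Continuous f)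
    (hfin : μ (Ioo a R) ≠ ∞) : IntegrableOn f (Ioo a R) μ := by
  obtain ⟨C, hC⟩ := isCompact_Icc.exists_bound_of_continuousOn hf.continuousOn
  exact Measure.integrableOn_of_bounded hfin hf.aestronglyMeasurable
    (ae_restrict_of_forall_mem measurableSet_Ioo fun t ht => hC t (Ioo_subset_Icc_self ht))

lemma integral_mul_indicator_one {μ : Measure ℝ} {s : Set ℝ} (hs : MeasurableSet s) (f : ℝ → ℝ) :
    ∫ t, f t * s.indicator (fun _ => (1:ℝ)) t ∂μ = ∫ t in s, f t ∂μ := by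
  simp_rw [← indicator_mul_right, mul_one]
  exact integral_indicator hs

lemma setIntegral_Ioo_id_div_eq {μ : Measure ℝ} {a R : ℝ} (hμ : 0 < (μ (Ioo a R)).toReal) :
    (∫ t in Ioo a R, t ∂μ) / (μ (Ioo a R)).toReal =
      R - (R - a) * (∫ t in Ioo a R, (R - t) / (R - a) ∂μ) / (μ (Ioo a R)).toReal := by
  have hRa : R - a ≠ 0 := sub_ne_zero.mpr (lt_of_measureReal_Ioo_pos hμ).ne'
  have hfin : μ (Ioo a R) ≠ ∞ := (ENNReal.toReal_pos_iff.mp hμ).2.ne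
  rw [eq_sub_iff_add_eq, ← add_div, div_eq_iff hμ.ne', ← integral_const_mul]
  simp_rw [mul_div_cancel₀ _ hRa]
  rw [integral_sub (integrableOn_const (C := R) hfin)
      (integrableOn_Ioo_of_continuous (f := fun t => t) continuous_id hfin),
    setIntegral_const, smul_eq_mul, measureReal_def]
  ring

lemma setIntegral_Ioo_nonneg {μ : Measure ℝ} {a R : ℝ} (haR : a < R) :
    0 ≤ ∫ t in Ioo a R, (R - t) / (R - a) ∂μ :=
  setIntegral_nonneg measurableSet_Ioo fun _ ht =>
    div_nonneg (sub_nonneg.mpr ht.2.le) (sub_nonneg.mpr haR.le)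

lemma abs_sub_div_sub_div_le {c D D' p p' : ℝ} (hc : 0 ≤ c) (hD' : 0 ≤ D') (hp : 0 < p)
    (hp' : 0 < p') :
    |c * D / p - c * D' / p'| ≤ |D' - D| * (c / p) + |p' - p| * (c * D' / p' / p) := by
  have hsplit :
      c * D / p - c * D' / p' = (D - D') * (c / p) + (p' - p) * (c * D' / p' / p) := by
    field_simp
    ring
  rw [hsplit]
  refine (abs_add_le _ _).trans_eq ?_
  rw [abs_mul, abs_mul, abs_sub_comm D D', abs_of_nonneg (by positivity : 0 ≤ c / p),
    abs_of_nonneg (by positivity : 0 ≤ c * D' / p' / p)]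

theorem conditional_mean_decomposition_bound_general
    (P : Measure ℝ)
    (Pn : Measure ℝ)
    (a R : ℝ)
    (hP : 0 < (P (Set.Ioo a R)).toReal) (hPn' : 0 < (Pn (Set.Ioo a R)).toReal) :
    |(∫ t, t * Set.indicator (Set.Ioo a R) (fun _ => (1:ℝ)) t ∂Pn) /
        (Pn (Set.Ioo a R)).toReal -
      (∫ t, t * Set.indicator (Set.Ioo a R) (fun _ => (1:ℝ)) t ∂P) /
        (P (Set.Ioo a R)).toReal| ≤
      |(∫ t, (R - t) / (R - a) * Set.indicator (Set.Ioo a R) (fun _ => (1:ℝ)) t ∂Pn) -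
        (∫ t, (R - t) / (R - a) * Set.indicator (Set.Ioo a R) (fun _ => (1:ℝ)) t ∂P)| *
        ((R - a) / (P (Set.Ioo a R)).toReal) +
      |(Pn (Set.Ioo a R)).toReal - (P (Set.Ioo a R)).toReal| *
        ((R - (∫ t, t * Set.indicator (Set.Ioo a R) (fun _ => (1:ℝ)) t ∂Pn) /
            (Pn (Set.Ioo a R)).toReal) / (P (Set.Ioo a R)).toReal) := by
  have haR : a < R := lt_of_measureReal_Ioo_pos hP
  simp only [integral_mul_indicator_one measurableSet_Ioo]
  rw [setIntegral_Ioo_id_div_eq hP, setIntegral_Ioo_id_div_eq hPn', sub_sub_sub_cancel_left,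
    sub_sub_cancel]
  exact abs_sub_div_sub_div_le (sub_pos.mpr haR).le (setIntegral_Ioo_nonneg haR) hP hPn'

/-- Decomposition bound for conditional mean deviations: with
`d_{a,R}(x) = (R-x)/(R-a) 𝟙{a<x<R}` and `h_{a,R}(x) = x 𝟙{a<x<R}`,
`|μ̂_{a,R} - μ_{a,R}| ≤ |Pₙd - Pd| (R-a)/P(a,R) + |Pₙ(a,R) - P(a,R)| (R-μ̂)/P(a,R)`. -/
theorem conditional_mean_decomposition_bound
    (P : Measure ℝ) [IsProbabilityMeasure P] (n : ℕ) (hn : 1 ≤ n) (x : Fin n → ℝ)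
    (Pn : Measure ℝ)
    (hPn : Pn = ((n : ℝ≥0∞))⁻¹ • ∑ i, Measure.dirac (x i))
    (a R : ℝ) (haR : a < R)
    (hP : 0 < (P (Set.Ioo a R)).toReal) (hPn' : 0 < (Pn (Set.Ioo a R)).toReal)
    (hInt : Integrable (fun t => t * Set.indicator (Set.Ioo a R) (fun _ => (1:ℝ)) t) P)
    (hIntd : Integrable
      (fun t => (R - t) / (R - a) * Set.indicator (Set.Ioo a R) (fun _ => (1:ℝ)) t) P) :
    |(∫ t, t * Set.indicator (Set.Ioo a R) (fun _ => (1:ℝ)) t ∂Pn) /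
        (Pn (Set.Ioo a R)).toReal -
      (∫ t, t * Set.indicator (Set.Ioo a R) (fun _ => (1:ℝ)) t ∂P) /
        (P (Set.Ioo a R)).toReal| ≤
      |(∫ t, (R - t) / (R - a) * Set.indicator (Set.Ioo a R) (fun _ => (1:ℝ)) t ∂Pn) -
        (∫ t, (R - t) / (R - a) * Set.indicator (Set.Ioo a R) (fun _ => (1:ℝ)) t ∂P)| *
        ((R - a) / (P (Set.Ioo a R)).toReal) +
      |(Pn (Set.Ioo a R)).toReal - (P (Set.Ioo a R)).toReal| *
        ((R - (∫ t, t * Set.indicator (Set.Ioo a R) (fun _ => (1:ℝ)) t ∂Pn) /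
            (Pn (Set.Ioo a R)).toReal) / (P (Set.Ioo a R)).toReal) :=
  conditional_mean_decomposition_bound_general P Pn a R hP hPn'
end
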